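/- arXiv:1902.08647 — 8 statements merged into one kernel-verified Lean document; each statement's English description precedes it below -/
import Mathlib

section
/- Fix a sequence of reals ρ_m ≥ 0 satisfying ρ_m = ρ_{m-1}/8 + 2C_m/N_m with ρ_0 = 0. Suppose for every epoch m and arm i the estimate r_i^m satisfies |r_i^m − μ_i| ≤ 2C_m/N_m + Δ_i^{m-1}/16, and r_⋆^m = max_i (r_i^m − Δ_i^{m-1}/16), and Δ_i^m = max{2^{-m}, r_⋆^m − r_i^m} with Δ_i^0 = 1. Then μ^⋆ − 2C_m/N_m − Δ_{i⋆}^{m-1}/8 ≤ r_⋆^m and r_⋆^m ≤ μ^⋆ + 2C_m/N_m, where μ^⋆ = max_i μ_i and i⋆ achieves the maximum. -/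
/-- Bounds on the estimate `r_⋆^m` of the maximal reward under the accuracy event. -/
theorem stmt3 (K : ℕ) (μ : Fin K → ℝ) (hμ : ∀ i, μ i ∈ Set.Icc (0:ℝ) 1)
    (istar : Fin K) (hstar : IsGreatest (Set.range μ) (μ istar))
    (C N : ℕ → ℝ) (hC : ∀ m, 0 ≤ C m) (hN : ∀ m, 0 < N m)
    (r : ℕ → Fin K → ℝ) (Δ : ℕ → Fin K → ℝ) (rstar : ℕ → ℝ)
    (hΔpos : ∀ m i, 0 < Δ m i)
    (hΔ0 : ∀ i, Δ 0 i = 1)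
    (hacc : ∀ m, 1 ≤ m → ∀ i, |r m i - μ i| ≤ 2 * C m / N m + Δ (m-1) i / 16)
    (hrstar : ∀ m, 1 ≤ m →
      IsGreatest (Set.range fun i => r m i - Δ (m-1) i / 16) (rstar m))
    (hΔ : ∀ m, 1 ≤ m → ∀ i, Δ m i = max ((1/2:ℝ)^m) (rstar m - r m i))
    (m : ℕ) (hm : 1 ≤ m) :
    μ istar - 2 * C m / N m - Δ (m-1) istar / 8 ≤ rstar m ∧
      rstar m ≤ μ istar + 2 * C m / N m := by
  obtain ⟨⟨j, hj⟩, hub⟩ := hrstar m hm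
  constructor
  · have h1 : rstar m ∈ _ := (hrstar m hm).1
    have h2 := (hrstar m hm).2 ⟨istar, rfl⟩
    have hacc' := abs_le.1 (hacc m hm istar)
    linarith [h2, hacc'.1, hacc'.2]
  · have hacc' := abs_le.1 (hacc m hm j)
    have hμj := hstar.2 ⟨j, rfl⟩
    have := hΔpos (m-1) j
    linarith [hacc'.2, hj]
end

section
/- Under the same deterministic assumptions (accuracy event |r_i^m − μ_i| ≤ 2C_m/N_m + Δ_i^{m-1}/16 for all i, m; r_⋆^m = max_i (r_i^m − Δ_i^{m-1}/16); Δ_i^m = max{2^{-m}, r_⋆^m − r_i^m}; Δ_i^0 = 1), defining ρ_m = Σ_{s=1}^m 2C_s/(8^{m-s} N_s), for every epoch m and arm i it holds that Δ_i^m ≤ 2(Δ_i + 2^{-m} + ρ_m), where Δ_i = μ⋆ − μ_i. -/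
/-- Upper bound on the gap estimates: `Δ_i^m ≤ 2(Δ_i + 2^{-m} + ρ_m)` where
`ρ_m = Σ_{s=1}^m 2C_s/(8^{m-s}N_s)` and `Δ_i = μ⋆ - μ_i`. -/
theorem stmt4 (K : ℕ) (μ : Fin K → ℝ) (hμ : ∀ i, μ i ∈ Set.Icc (0:ℝ) 1)
    (istar : Fin K) (hstar : IsGreatest (Set.range μ) (μ istar))
    (C N : ℕ → ℝ) (hC : ∀ m, 0 ≤ C m) (hN : ∀ m, 0 < N m)
    (r : ℕ → Fin K → ℝ) (Δ : ℕ → Fin K → ℝ) (rstar : ℕ → ℝ)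
    (hΔ0 : ∀ i, Δ 0 i = 1)
    (hacc : ∀ m, 1 ≤ m → ∀ i, |r m i - μ i| ≤ 2 * C m / N m + Δ (m-1) i / 16)
    (hrstar : ∀ m, 1 ≤ m →
      IsGreatest (Set.range fun i => r m i - Δ (m-1) i / 16) (rstar m))
    (hΔ : ∀ m, 1 ≤ m → ∀ i, Δ m i = max ((1/2:ℝ)^m) (rstar m - r m i)) :
    ∀ m, 1 ≤ m → ∀ i,
      Δ m i ≤ 2 * ((μ istar - μ i) + (1/2:ℝ)^m +
        ∑ s ∈ Finset.Icc 1 m, 2 * C s / ((8:ℝ)^(m-s) * N s)) := by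
  have hgap : ∀ i, 0 ≤ μ istar - μ i := fun i => sub_nonneg.2 (hstar.2 ⟨i, rfl⟩)
  have hterm : ∀ m s : ℕ, 0 ≤ 2 * C s / ((8:ℝ)^(m-s) * N s) := by
    intro m s
    have := hC s; have := hN s
    positivity
  have hρ : ∀ m, 0 ≤ ∑ s ∈ Finset.Icc 1 m, 2 * C s / ((8:ℝ)^(m-s) * N s) :=
    fun m => Finset.sum_nonneg fun s _ => hterm m s
  -- recursion for ρ
  have hρrec : ∀ m : ℕ,
      ∑ s ∈ Finset.Icc 1 (m+1), 2 * C s / ((8:ℝ)^(m+1-s) * N s)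
        = (∑ s ∈ Finset.Icc 1 m, 2 * C s / ((8:ℝ)^(m-s) * N s)) / 8
          + 2 * C (m+1) / N (m+1) := by
    intro m
    rw [Finset.sum_Icc_succ_top (by omega : 1 ≤ m + 1)]
    have h1 : ∑ s ∈ Finset.Icc 1 m, 2 * C s / ((8:ℝ)^(m+1-s) * N s)
        = (∑ s ∈ Finset.Icc 1 m, 2 * C s / ((8:ℝ)^(m-s) * N s)) / 8 := by
      rw [Finset.sum_div]
      apply Finset.sum_congr rfl
      intro s hs
      have hsm : s ≤ m := (Finset.mem_Icc.1 hs).2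
      have : m + 1 - s = (m - s) + 1 := by omega
      rw [this, pow_succ]
      have h8 : (8:ℝ)^(m-s) * 8 * N s = ((8:ℝ)^(m-s) * N s) * 8 := by ring
      rw [h8, ← div_div]
    have h2 : m + 1 - (m + 1) = 0 := by omega
    rw [h1, h2, pow_zero, one_mul]
  suffices h : ∀ m, ∀ i, Δ m i ≤ 2 * ((μ istar - μ i) + (1/2:ℝ)^m +
      ∑ s ∈ Finset.Icc 1 m, 2 * C s / ((8:ℝ)^(m-s) * N s)) by
    intro m _ i; exact h m i
  intro m
  induction m with
  | zero =>
      intro i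
      simp only [pow_zero, Finset.Icc_self]
      have : Finset.Icc 1 0 = (∅ : Finset ℕ) := by decide
      rw [this]
      simp [hΔ0 i]
      nlinarith [hgap i]
  | succ m ih =>
      intro i
      have hm1 : 1 ≤ m + 1 := by omega
      have hsub : m + 1 - 1 = m := by omega
      -- accuracy for arm i at epoch m+1
      have hacci := hacc (m+1) hm1 i
      rw [hsub] at hacci
      have hacci' := abs_le.1 hacci
      -- upper bound on rstar (m+1)
      have hrs := hrstar (m+1) hm1
      rw [hsub] at hrs
      obtain ⟨j, hj⟩ := hrs.1
      have haccj := abs_le.1 (hacc (m+1) hm1 j)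
      rw [hsub] at haccj
      have hrs_ub : rstar (m+1) ≤ μ istar + 2 * C (m+1) / N (m+1) := by
        have hμj : μ j ≤ μ istar := hstar.2 ⟨j, rfl⟩
        nlinarith [haccj.2, hj]
      -- lower bound on r (m+1) i
      have hr_lb : μ i - 2 * C (m+1) / N (m+1) - Δ m i / 16 ≤ r (m+1) i := by
        linarith [hacci'.1]
      -- pieces
      have hρm := hρ m
      have hρm1 := hρ (m+1)
      have hihi := ih i
      have hgapi := hgap i
      have hterm1 : 2 * C (m+1) / N (m+1) ≤
          ∑ s ∈ Finset.Icc 1 (m+1), 2 * C s / ((8:ℝ)^(m+1-s) * N s) := by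
        rw [hρrec m]; linarith
      have hpow : (0:ℝ) < (1/2:ℝ)^m := by positivity
      rw [hΔ (m+1) hm1 i]
      apply max_le
      · rw [pow_succ]
        nlinarith
      · rw [hρrec m, pow_succ]
        nlinarith [hrs_ub, hr_lb]
end

section
/- Under the same deterministic assumptions as above (accuracy event, definitions of r_⋆^m, Δ_i^m, ρ_m), for every epoch m and arm i it holds that Δ_i^m ≥ Δ_i/2 − 3ρ_m − (3/4)·2^{-m}. -/
lemma rho_succ (C N : ℕ → ℝ) (hN : ∀ m, 0 < N m) (n : ℕ) :
    ∑ s ∈ Finset.Icc 1 (n+1), 2 * C s / ((8:ℝ)^(n+1-s) * N s)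
      = 2 * C (n+1) / N (n+1)
        + (1/8) * ∑ s ∈ Finset.Icc 1 n, 2 * C s / ((8:ℝ)^(n-s) * N s) := by
  rw [Finset.sum_Icc_succ_top (by omega : 1 ≤ n + 1), Finset.mul_sum]
  have h1 : 2 * C (n+1) / ((8:ℝ)^(n+1-(n+1)) * N (n+1)) = 2 * C (n+1) / N (n+1) := by
    simp
  rw [h1, add_comm]
  congr 1
  apply Finset.sum_congr rfl
  intro s hs
  have hs' : s ≤ n := (Finset.mem_Icc.mp hs).2
  have h2 : n + 1 - s = (n - s) + 1 := by omega
  rw [h2, pow_succ, div_mul_div_comm, one_mul]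
  congr 1
  ring

lemma rho_nonneg (C N : ℕ → ℝ) (hC : ∀ m, 0 ≤ C m) (hN : ∀ m, 0 < N m) (m : ℕ) :
    0 ≤ ∑ s ∈ Finset.Icc 1 m, 2 * C s / ((8:ℝ)^(m-s) * N s) := by
  apply Finset.sum_nonneg
  intro s _
  have := hC s
  have := hN s
  positivity

/-- Lower bound on the gap estimates: `Δ_i^m ≥ Δ_i/2 − 3ρ_m − (3/4)·2^{-m}` where
`ρ_m = Σ_{s=1}^m 2C_s/(8^{m-s}N_s)` and `Δ_i = μ⋆ - μ_i`. -/
theorem stmt5 (K : ℕ) (μ : Fin K → ℝ) (hμ : ∀ i, μ i ∈ Set.Icc (0:ℝ) 1)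
    (istar : Fin K) (hstar : IsGreatest (Set.range μ) (μ istar))
    (C N : ℕ → ℝ) (hC : ∀ m, 0 ≤ C m) (hN : ∀ m, 0 < N m)
    (r : ℕ → Fin K → ℝ) (Δ : ℕ → Fin K → ℝ) (rstar : ℕ → ℝ)
    (hΔ0 : ∀ i, Δ 0 i = 1)
    (hacc : ∀ m, 1 ≤ m → ∀ i, |r m i - μ i| ≤ 2 * C m / N m + Δ (m-1) i / 16)
    (hrstar : ∀ m, 1 ≤ m →
      IsGreatest (Set.range fun i => r m i - Δ (m-1) i / 16) (rstar m))
    (hΔ : ∀ m, 1 ≤ m → ∀ i, Δ m i = max ((1/2:ℝ)^m) (rstar m - r m i)) :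
    ∀ m, 1 ≤ m → ∀ i,
      (μ istar - μ i) / 2 -
          3 * (∑ s ∈ Finset.Icc 1 m, 2 * C s / ((8:ℝ)^(m-s) * N s)) -
          (3/4) * (1/2:ℝ)^m
        ≤ Δ m i := by
  set ρ : ℕ → ℝ := fun m => ∑ s ∈ Finset.Icc 1 m, 2 * C s / ((8:ℝ)^(m-s) * N s) with hρ
  have hρ0 : ∀ m, 0 ≤ ρ m := rho_nonneg C N hC hN
  have hρrec : ∀ n : ℕ, ρ (n+1) = 2 * C (n+1) / N (n+1) + (1/8) * ρ n :=
    rho_succ C N hN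
  have hgap : ∀ i, 0 ≤ μ istar - μ i := fun i => by
    have := hstar.2 ⟨i, rfl⟩; linarith
  have hCN : ∀ m, 0 ≤ 2 * C m / N m := fun m => by
    have := hC m; have := hN m; positivity
  -- Upper bound: Δ m i ≤ 2 (μ⋆ - μ i) + 2 ρ m + 2 (1/2)^m
  have A : ∀ m i, Δ m i ≤ 2 * (μ istar - μ i) + 2 * ρ m + 2 * (1/2:ℝ)^m := by
    intro m
    induction m with
    | zero =>
      intro i
      rw [hΔ0 i]
      have := hgap i
      have h0 : ρ 0 = 0 := by simp [hρ]
      rw [h0]; norm_num; linarith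
    | succ n ih =>
      intro i
      rw [hΔ (n+1) (by omega) i]
      have hp1 : (0:ℝ) ≤ (1/2:ℝ)^(n+1) := by positivity
      have hp0 : (0:ℝ) ≤ (1/2:ℝ)^n := by positivity
      apply max_le
      · linarith [hgap i, hρ0 (n+1)]
      · obtain ⟨j, hj⟩ := (hrstar (n+1) (by omega)).1
        have hj' : r (n+1) j - Δ ((n+1)-1) j / 16 = rstar (n+1) := hj
        have haccj := hacc (n+1) (by omega) j
        have hacci := hacc (n+1) (by omega) i
        have hsub : (n + 1) - 1 = n := by omega
        rw [hsub] at haccj hacci hj'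
        have hj1 := (abs_le.mp haccj).2
        have hi1 := (abs_le.mp hacci).1
        have hrsu : rstar (n+1) ≤ μ istar + 2 * C (n+1) / N (n+1) := by
          have hgj := hgap j
          linarith
        have hih := ih i
        have hpow : (1/2:ℝ)^(n+1) = (1/2:ℝ)^n * (1/2) := pow_succ _ _
        have hrec := hρrec n
        linarith [hρ0 n, hgap i, hCN (n+1)]
  -- Main lower bound
  intro m hm i
  obtain ⟨n, rfl⟩ : ∃ n, m = n + 1 := ⟨m - 1, by omega⟩
  rw [hΔ (n+1) (by omega) i]
  have hsub : (n + 1) - 1 = n := by omega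
  have hrsl : r (n+1) istar - Δ ((n+1)-1) istar / 16 ≤ rstar (n+1) :=
    (hrstar (n+1) (by omega)).2 ⟨istar, rfl⟩
  have haccs := hacc (n+1) (by omega) istar
  have hacci := hacc (n+1) (by omega) i
  rw [hsub] at hrsl haccs hacci
  have hs1 := (abs_le.mp haccs).1
  have hi1 := (abs_le.mp hacci).2
  have hAstar := A n istar
  have hAi := A n i
  have hpow : (1/2:ℝ)^(n+1) = (1/2:ℝ)^n * (1/2) := pow_succ _ _
  have hrec := hρrec n
  have hρn := hρ0 n
  have hg := hgap i
  have hCN1 := hCN (n+1)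
  have hp0 : (0:ℝ) ≤ (1/2:ℝ)^n := by positivity
  have hstar0 : μ istar - μ istar = 0 := by ring
  rw [hstar0] at hAstar
  have hlb : (μ istar - μ i) / 2 - 3 * ρ (n+1) - (3/4) * (1/2:ℝ)^(n+1)
      ≤ rstar (n+1) - r (n+1) i := by
    linarith
  exact hlb.trans (le_max_right _ _)
end

section
/- Let Δ > 0, λ > 0, and suppose the estimate Δ' satisfies 2^{-(m-1)} ≤ Δ' ≤ 1 and Δ' ≥ Δ/2 − 3ρ − (3/4)·2^{-(m-1)}, where ρ ≥ 0. Define n = λ(Δ')^{-2}. Then: (1) if Δ ≤ 4·2^{-m}, then nΔ ≤ 4λ/Δ; (2) if Δ > 4·2^{-m} and ρ < Δ/32, then Δ' ≥ Δ/32 and hence nΔ ≤ 32²λ/Δ; (3) if ρ ≥ Δ/32, then nΔ ≤ 8λρ·2^{2m}. -/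
/-- The three-case analysis bounding the per-epoch regret contribution `n·Δ`
of a single arm in epoch `m` of BARBAR. -/
theorem stmt6 (m : ℕ) (hm : 1 ≤ m) (Δ Δ' lam ρ n : ℝ)
    (hΔ : 0 < Δ) (hlam : 0 < lam) (hρ : 0 ≤ ρ)
    (hΔ'lb : ((1/2:ℝ))^(m-1) ≤ Δ') (hΔ'ub : Δ' ≤ 1)
    (hΔ'est : Δ/2 - 3*ρ - (3/4) * ((1/2:ℝ))^(m-1) ≤ Δ')
    (hn : n = lam / Δ'^2) :
    (Δ ≤ 4 * ((1/2:ℝ))^m → n * Δ ≤ 4 * lam / Δ) ∧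
    (4 * ((1/2:ℝ))^m < Δ → ρ < Δ/32 → Δ/32 ≤ Δ' ∧ n * Δ ≤ 32^2 * lam / Δ) ∧
    (Δ/32 ≤ ρ → n * Δ ≤ 8 * lam * ρ * 2^(2*m)) := by
  have hp : (0:ℝ) < (1/2)^(m-1) := by positivity
  have hΔ' : 0 < Δ' := lt_of_lt_of_le hp hΔ'lb
  have hme : m = (m - 1) + 1 := (Nat.succ_pred_eq_of_pos hm).symm
  have hpow : ((1/2:ℝ))^m = (1/2)^(m-1) * (1/2) := by
    conv_lhs => rw [hme, pow_succ]
  refine ⟨?_, ?_, ?_⟩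
  · intro h
    have h2 : Δ ≤ 2 * Δ' := by rw [hpow] at h; linarith
    have h3 : Δ * Δ ≤ (2*Δ') * (2*Δ') := mul_le_mul h2 h2 hΔ.le (by positivity)
    rw [hn, div_mul_eq_mul_div, div_le_div_iff₀ (by positivity) hΔ]
    nlinarith [mul_le_mul_of_nonneg_left h3 hlam.le]
  · intro h1 h2
    have hlb : Δ/32 ≤ Δ' := by rw [hpow] at h1; nlinarith
    refine ⟨hlb, ?_⟩
    have h3 : Δ * Δ ≤ (32*Δ') * (32*Δ') :=
      mul_le_mul (by linarith) (by linarith) hΔ.le (by positivity)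
    rw [hn, div_mul_eq_mul_div, div_le_div_iff₀ (by positivity) hΔ]
    nlinarith [mul_le_mul_of_nonneg_left h3 hlam.le]
  · intro h
    have hsq : ((1/2:ℝ))^(m-1) * ((1/2:ℝ))^(m-1) ≤ Δ' * Δ' :=
      mul_le_mul hΔ'lb hΔ'lb (le_of_lt hp) (le_of_lt hΔ')
    have hone : ((1/2:ℝ))^(m-1) * (2:ℝ)^(m-1) = 1 := by
      rw [← mul_pow]; norm_num
    have htwo : (2:ℝ)^(2*m) = 4 * ((2:ℝ)^(m-1) * (2:ℝ)^(m-1)) := by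
      have h2m : 2*m = (m-1)+((m-1)+2) := by omega
      rw [h2m, pow_add, pow_add]; ring
    have hpow2 : ((1/2:ℝ))^(m-1) * ((1/2:ℝ))^(m-1) * (2:ℝ)^(2*m) = 4 := by
      rw [htwo]; linear_combination (4 * ((1/2:ℝ))^(m-1) * (2:ℝ)^(m-1) + 4) * hone
    have h2m : (0:ℝ) < (2:ℝ)^(2*m) := by positivity
    rw [hn, div_mul_eq_mul_div, div_le_iff₀ (by positivity)]
    have key : lam * Δ ≤ 32 * lam * ρ := by nlinarith
    have h4 : (4:ℝ) ≤ Δ' * Δ' * 2^(2*m) := by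
      nlinarith [mul_le_mul_of_nonneg_right hsq h2m.le]
    have h5 := mul_le_mul_of_nonneg_left h4 (by positivity : (0:ℝ) ≤ lam * ρ)
    nlinarith [key, h5]
end

section
/- Summing the per-epoch bounds: if for all arms i ≠ i⋆ and all epochs m ≤ M we have R_i^m ≤ 32²λ/Δ_i + 8λρ_{m-1}·2^{2m}, and N_s ≥ λ2^{2(s-1)}, ρ_{m-1} = Σ_{s=1}^{m-1} 2C_s/(8^{m-1-s}N_s), and M ≤ log₂ T, then Σ_{m=1}^M Σ_{i≠i⋆} R_i^m ≤ 32²λ·Σ_{i≠i⋆} (log₂ T)/Δ_i + 512·K·Σ_{s=1}^M C_s. -/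
lemma geo_aux (s M : ℕ) : ∑ m ∈ Finset.Icc (s+1) M, ((2:ℝ)^m)⁻¹ ≤ ((2:ℝ)^s)⁻¹ := by
  rw [← Finset.Ico_add_one_right_eq_Icc, Finset.sum_Ico_eq_sum_range]
  have h1 : ∑ i ∈ Finset.range (M + 1 - (s+1)), ((2:ℝ)^(s+1+i))⁻¹
      = ((2:ℝ)^(s+1))⁻¹ * ∑ i ∈ Finset.range (M + 1 - (s+1)), (1/2:ℝ)^i := by
    rw [Finset.mul_sum]
    refine Finset.sum_congr rfl fun i _ => ?_
    rw [pow_add, mul_inv]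
    ring_nf
    norm_num
  rw [h1]
  have h2 := sum_geometric_two_le (M + 1 - (s+1))
  have hp : (0:ℝ) < ((2:ℝ)^(s+1))⁻¹ := by positivity
  calc ((2:ℝ)^(s+1))⁻¹ * ∑ i ∈ Finset.range (M + 1 - (s+1)), (1/2:ℝ)^i
      ≤ ((2:ℝ)^(s+1))⁻¹ * 2 := by nlinarith
    _ = ((2:ℝ)^s)⁻¹ := by rw [pow_succ]; field_simp

lemma term_aux (m s : ℕ) (lam Cs Ns : ℝ) (hC : 0≤Cs)
    (hNs : lam*2^(2*(s-1)) ≤ Ns) (hNpos : 0 < Ns) (hs1 : 1 ≤ s) (hsm : s ≤ m-1) (hm : 1 ≤ m) :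
    8*lam*(2*Cs/((8:ℝ)^(m-1-s)*Ns))*2^(2*m) ≤ 512 * Cs * 2^s / 2^m := by
  have h8 : (8:ℝ)^(m-1-s) = 2^(3*(m-1-s)) := by
    rw [show (8:ℝ)=2^3 by norm_num, ← pow_mul]
  have hden : (0:ℝ) < (8:ℝ)^(m-1-s) * Ns := by positivity
  have hpow : (16:ℝ)*2^(2*m)*2^m = 512*2^s*(2^(3*(m-1-s))*2^(2*(s-1))) := by
    rw [show (16:ℝ)=2^4 by norm_num, show (512:ℝ)=2^9 by norm_num,
      ← pow_add, ← pow_add, ← pow_add, ← pow_add, ← pow_add]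
    congr 1
    omega
  rw [show 8*lam*(2*Cs/((8:ℝ)^(m-1-s)*Ns))*2^(2*m)
      = (16*lam*Cs*2^(2*m))/((8:ℝ)^(m-1-s)*Ns) by ring,
    div_le_div_iff₀ hden (by positivity)]
  calc 16*lam*Cs*(2:ℝ)^(2*m)*2^m = Cs*((16:ℝ)*2^(2*m)*2^m)*lam := by ring
    _ = Cs*(512*2^s*((2:ℝ)^(3*(m-1-s))*2^(2*(s-1))))*lam := by rw [hpow]
    _ = 512*Cs*2^s*((8:ℝ)^(m-1-s)*(lam*2^(2*(s-1)))) := by rw [h8]; ring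
    _ ≤ 512*Cs*2^s*((8:ℝ)^(m-1-s)*Ns) := by gcongr

/-- Summing the per-epoch per-arm regret bounds over all epochs `m ≤ M ≤ log₂ T`
and arms `i ≠ i⋆` yields the total regret bound of BARBAR. -/
theorem stmt8 (K M : ℕ) (hK : 1 ≤ K) (istar : Fin K) (T lam : ℝ)
    (hT : 2 ≤ T) (hlam : 0 < lam)
    (Δ : Fin K → ℝ) (hΔ : ∀ i, i ≠ istar → Δ i ∈ Set.Ioc (0:ℝ) 1)
    (C N : ℕ → ℝ) (hC : ∀ s, 0 ≤ C s)
    (hN : ∀ s, lam * 2^(2*(s-1)) ≤ N s) (hNpos : ∀ s, 0 < N s)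
    (hM : (M : ℝ) ≤ Real.logb 2 T)
    (R : ℕ → Fin K → ℝ)
    (hR : ∀ m ∈ Finset.Icc 1 M, ∀ i, i ≠ istar →
      R m i ≤ 32^2 * lam / Δ i +
        8 * lam * (∑ s ∈ Finset.Icc 1 (m-1), 2 * C s / ((8:ℝ)^(m-1-s) * N s)) * 2^(2*m)) :
    ∑ m ∈ Finset.Icc 1 M, ∑ i ∈ Finset.univ.erase istar, R m i ≤
      32^2 * lam * ∑ i ∈ Finset.univ.erase istar, Real.logb 2 T / Δ i +
        512 * K * ∑ s ∈ Finset.Icc 1 M, C s := by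
  set B : ℕ → ℝ := fun m => ∑ s ∈ Finset.Icc 1 (m-1), 512 * C s * 2^s / 2^m with hB
  have hBnonneg : ∀ m, 0 ≤ B m := by
    intro m
    apply Finset.sum_nonneg
    intro s _
    have := hC s
    positivity
  have hcard : (Finset.univ.erase istar).card = K - 1 := by
    rw [Finset.card_erase_of_mem (Finset.mem_univ _), Finset.card_univ, Fintype.card_fin]
  -- step 1 : pointwise bound
  have step1 : ∀ m ∈ Finset.Icc 1 M, ∀ i ∈ Finset.univ.erase istar,
      R m i ≤ 32^2 * lam / Δ i + B m := by
    intro m hm i hi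
    rw [Finset.mem_erase] at hi
    rw [Finset.mem_Icc] at hm
    refine le_trans (hR m (Finset.mem_Icc.mpr hm) i hi.1) ?_
    gcongr
    simp only [hB]
    rw [Finset.mul_sum, Finset.sum_mul]
    apply Finset.sum_le_sum
    intro s hs
    rw [Finset.mem_Icc] at hs
    exact term_aux m s lam (C s) (N s) (hC s) (hN s) (hNpos s) hs.1 hs.2 hm.1
  -- step 2 : total B bound
  have step2 : ∑ m ∈ Finset.Icc 1 M, B m ≤ 512 * ∑ s ∈ Finset.Icc 1 M, C s := by
    have hswap : ∑ m ∈ Finset.Icc 1 M, B m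
        = ∑ s ∈ Finset.Icc 1 M, ∑ m ∈ Finset.Icc (s+1) M, 512 * C s * 2^s / 2^m := by
      apply Finset.sum_comm'
      intro m s
      simp only [Finset.mem_Icc]
      omega
    rw [hswap, Finset.mul_sum]
    apply Finset.sum_le_sum
    intro s _
    have heq : ∑ m ∈ Finset.Icc (s+1) M, 512 * C s * 2^s / 2^m
        = (512 * C s * 2^s) * ∑ m ∈ Finset.Icc (s+1) M, ((2:ℝ)^m)⁻¹ := by
      rw [Finset.mul_sum]
      exact Finset.sum_congr rfl fun m _ => by rw [div_eq_mul_inv]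
    rw [heq]
    calc (512 * C s * 2^s) * ∑ m ∈ Finset.Icc (s+1) M, ((2:ℝ)^m)⁻¹
        ≤ (512 * C s * 2^s) * ((2:ℝ)^s)⁻¹ := by
          have := hC s
          have hg := geo_aux s M
          gcongr
      _ = 512 * C s := by
          rw [mul_assoc, mul_assoc, mul_inv_cancel₀ (by positivity), mul_one]
  have hCsum : 0 ≤ ∑ s ∈ Finset.Icc 1 M, C s := Finset.sum_nonneg fun s _ => hC s
  -- combine
  calc ∑ m ∈ Finset.Icc 1 M, ∑ i ∈ Finset.univ.erase istar, R m i
      ≤ ∑ m ∈ Finset.Icc 1 M, ∑ i ∈ Finset.univ.erase istar, (32^2 * lam / Δ i + B m) := by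
        apply Finset.sum_le_sum
        intro m hm
        exact Finset.sum_le_sum (step1 m hm)
    _ = ∑ m ∈ Finset.Icc 1 M, ((∑ i ∈ Finset.univ.erase istar, 32^2 * lam / Δ i)
          + ((K-1:ℕ):ℝ) * B m) := by
        refine Finset.sum_congr rfl fun m _ => ?_
        rw [Finset.sum_add_distrib, Finset.sum_const, hcard, nsmul_eq_mul]
    _ = (M:ℝ) * (∑ i ∈ Finset.univ.erase istar, 32^2 * lam / Δ i)
          + ((K-1:ℕ):ℝ) * ∑ m ∈ Finset.Icc 1 M, B m := by
        rw [Finset.sum_add_distrib, Finset.sum_const, Nat.card_Icc, Nat.add_sub_cancel,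
          nsmul_eq_mul, ← Finset.mul_sum]
    _ ≤ 32^2 * lam * ∑ i ∈ Finset.univ.erase istar, Real.logb 2 T / Δ i
        + 512 * K * ∑ s ∈ Finset.Icc 1 M, C s := by
        have h1 : (M:ℝ) * (∑ i ∈ Finset.univ.erase istar, 32^2 * lam / Δ i)
            ≤ 32^2 * lam * ∑ i ∈ Finset.univ.erase istar, Real.logb 2 T / Δ i := by
          rw [Finset.mul_sum, Finset.mul_sum]
          apply Finset.sum_le_sum
          intro i hi
          have hΔi := hΔ i (Finset.mem_erase.mp hi).1
          have hpos : 0 < Δ i := hΔi.1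
          calc (M:ℝ) * (32^2 * lam / Δ i)
              ≤ Real.logb 2 T * (32^2 * lam / Δ i) :=
                mul_le_mul_of_nonneg_right hM (by positivity)
            _ = 32^2 * lam * (Real.logb 2 T / Δ i) := by ring
        have h2 : ((K-1:ℕ):ℝ) * ∑ m ∈ Finset.Icc 1 M, B m
            ≤ 512 * K * ∑ s ∈ Finset.Icc 1 M, C s := by
          have hBsum : 0 ≤ ∑ m ∈ Finset.Icc 1 M, B m :=
            Finset.sum_nonneg fun m _ => hBnonneg m
          calc ((K-1:ℕ):ℝ) * ∑ m ∈ Finset.Icc 1 M, B m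
              ≤ (K:ℝ) * ∑ m ∈ Finset.Icc 1 M, B m := by
                apply mul_le_mul_of_nonneg_right _ hBsum
                exact_mod_cast Nat.sub_le K 1
            _ ≤ (K:ℝ) * (512 * ∑ s ∈ Finset.Icc 1 M, C s) :=
                mul_le_mul_of_nonneg_left step2 (by positivity)
            _ = 512 * K * ∑ s ∈ Finset.Icc 1 M, C s := by ring
        linarith
end

section
/- Let X₁,…,X_T be a martingale difference sequence adapted to a filtration (F_t), with |X_t| ≤ b almost surely, and let V = Σ_{t=1}^T E[X_t² | F_{t−1}]. Then for any δ ∈ (0,1), with probability at least 1 − δ, Σ_{t=1}^T X_t ≤ V/b + b·ln(1/δ). -/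
open MeasureTheory Real Finset

lemma exp_le_one_add_self_add_sq {x : ℝ} (hx : x ≤ 1) :
    Real.exp x ≤ 1 + x + x ^ 2 := by
  rcases le_or_gt x (-1) with h | h
  · have h1 : Real.exp x ≤ Real.exp (-1) := Real.exp_le_exp.2 h
    have h2 : Real.exp (-1) ≤ 1 := Real.exp_le_one_iff.2 (by norm_num)
    nlinarith
  · have habs : |x| ≤ 1 := abs_le.2 ⟨h.le, hx⟩
    have hb := Real.exp_bound habs (by norm_num : 0 < 2)
    have hsum : ∑ i ∈ Finset.range 2, x ^ i / i.factorial = 1 + x := by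
      simp [Finset.sum_range_succ]
    rw [hsum] at hb
    have h2 : |x| ^ 2 = x ^ 2 := sq_abs x
    have h3 : Real.exp x - (1 + x) ≤ |x| ^ 2 * ((2 : ℕ).succ / ((2:ℕ).factorial * 2)) :=
      (abs_le.1 hb).2
    rw [h2] at h3
    norm_num at h3
    nlinarith [sq_nonneg x]

/-- main supermartingale bound -/
lemma freedman_key {Ω : Type*} {mΩ : MeasurableSpace Ω} (μ : Measure Ω)
    [IsProbabilityMeasure μ] (ℱ : Filtration ℕ mΩ)
    (X : ℕ → Ω → ℝ) (b : ℝ) (hb : 0 < b)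
    (hadapted : ∀ t, StronglyMeasurable[ℱ t] (X t))
    (hmds : ∀ t, 1 ≤ t → μ[X t | ℱ (t-1)] =ᵐ[μ] 0)
    (hbound : ∀ t ω, |X t ω| ≤ b) (n : ℕ) :
    Integrable (fun ω => Real.exp ((∑ t ∈ Finset.Icc 1 n, X t ω) / b
      - (∑ t ∈ Finset.Icc 1 n, (μ[fun ω' => (X t ω')^2 | ℱ (t-1)]) ω) / b ^ 2)) μ ∧
    ∫ ω, Real.exp ((∑ t ∈ Finset.Icc 1 n, X t ω) / b
      - (∑ t ∈ Finset.Icc 1 n, (μ[fun ω' => (X t ω')^2 | ℱ (t-1)]) ω) / b ^ 2) ∂μ ≤ 1 := by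
  set v : ℕ → Ω → ℝ := fun t => μ[fun ω' => (X t ω')^2 | ℱ (t-1)] with hv
  have hXm : ∀ t, StronglyMeasurable (X t) := fun t => (hadapted t).mono (ℱ.le t)
  have hXint : ∀ t, Integrable (X t) μ := fun t =>
    Integrable.mono' (integrable_const b) (hXm t).aestronglyMeasurable
      (ae_of_all _ fun ω => by simpa using hbound t ω)
  have hX2int : ∀ t, Integrable (fun ω => (X t ω)^2) μ := by
    intro t
    refine Integrable.mono' (integrable_const (b^2))
      (((hXm t).pow 2).aestronglyMeasurable) (ae_of_all _ fun ω => ?_)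
    rw [Real.norm_eq_abs, abs_pow, ← sq_abs, abs_abs]
    exact pow_le_pow_left₀ (abs_nonneg _) (hbound t ω) 2
  have hvsm : ∀ t, StronglyMeasurable[ℱ (t-1)] (v t) := fun t => stronglyMeasurable_condExp
  have hvnn : ∀ t, 0 ≤ᵐ[μ] v t := fun t =>
    condExp_nonneg (ae_of_all _ fun ω => sq_nonneg _)
  -- a.e. all v nonneg
  have hvnn' : ∀ᵐ ω ∂μ, ∀ t, 0 ≤ v t ω := ae_all_iff.2 hvnn
  -- strong measurability of W n
  have hWsm : ∀ n, StronglyMeasurable[ℱ n] (fun ω => (∑ t ∈ Finset.Icc 1 n, X t ω) / b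
      - (∑ t ∈ Finset.Icc 1 n, v t ω) / b ^ 2) := by
    intro n
    simp only [div_eq_mul_inv]
    apply StronglyMeasurable.sub
    · exact (Finset.stronglyMeasurable_fun_sum _ fun t ht =>
        ((hadapted t).mono (ℱ.mono (Finset.mem_Icc.1 ht).2))).mul_const _
    · exact (Finset.stronglyMeasurable_fun_sum _ fun t ht =>
        ((hvsm t).mono (ℱ.mono (le_trans (Nat.sub_le t 1) (Finset.mem_Icc.1 ht).2)))).mul_const _
  -- a.e. bound on exp(W n)
  have hMbd : ∀ n, ∀ᵐ ω ∂μ, ‖Real.exp ((∑ t ∈ Finset.Icc 1 n, X t ω) / b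
      - (∑ t ∈ Finset.Icc 1 n, v t ω) / b ^ 2)‖ ≤ Real.exp n := by
    intro n
    filter_upwards [hvnn'] with ω hω
    rw [Real.norm_eq_abs, abs_of_pos (Real.exp_pos _), Real.exp_le_exp]
    have h1 : (∑ t ∈ Finset.Icc 1 n, X t ω) ≤ n * b := by
      calc (∑ t ∈ Finset.Icc 1 n, X t ω) ≤ ∑ t ∈ Finset.Icc 1 n, b :=
            Finset.sum_le_sum fun t _ => (abs_le.1 (hbound t ω)).2
        _ = (n : ℝ) * b := by
            rw [Finset.sum_const, Nat.card_Icc]; push_cast [Nat.add_sub_cancel]; ring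
    have h2 : 0 ≤ ∑ t ∈ Finset.Icc 1 n, v t ω := Finset.sum_nonneg fun t _ => hω t
    calc (∑ t ∈ Finset.Icc 1 n, X t ω) / b - (∑ t ∈ Finset.Icc 1 n, v t ω) / b ^ 2
        ≤ (∑ t ∈ Finset.Icc 1 n, X t ω) / b := by
          have : 0 ≤ (∑ t ∈ Finset.Icc 1 n, v t ω) / b ^ 2 := by positivity
          linarith
      _ ≤ (n * b) / b := by gcongr
      _ = n := by field_simp
  have hMint : ∀ n, Integrable (fun ω => Real.exp ((∑ t ∈ Finset.Icc 1 n, X t ω) / b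
      - (∑ t ∈ Finset.Icc 1 n, v t ω) / b ^ 2)) μ := fun n =>
    Integrable.mono' (integrable_const (Real.exp n))
      (Real.continuous_exp.comp_stronglyMeasurable
        ((hWsm n).mono (ℱ.le n))).aestronglyMeasurable (hMbd n)
  refine ⟨hMint n, ?_⟩
  induction n with
  | zero =>
      simp only [show Finset.Icc 1 0 = (∅ : Finset ℕ) from rfl, Finset.sum_empty,
        zero_div, sub_zero, Real.exp_zero]
      simp
  | succ n ih =>
      set G : Ω → ℝ := fun ω => Real.exp ((∑ t ∈ Finset.Icc 1 n, X t ω) / b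
        - (∑ t ∈ Finset.Icc 1 n, v t ω) / b ^ 2 - v (n+1) ω / b ^ 2) with hGdef
      set F : Ω → ℝ := fun ω => Real.exp (X (n+1) ω / b) with hFdef
      have hone : (1:ℕ) ≤ n + 1 := Nat.le_add_left 1 n
      have hsplit : (fun ω => Real.exp ((∑ t ∈ Finset.Icc 1 (n+1), X t ω) / b
          - (∑ t ∈ Finset.Icc 1 (n+1), v t ω) / b ^ 2)) = fun ω => G ω * F ω := by
        funext ω
        rw [hGdef, hFdef, ← Real.exp_add]
        congr 1
        rw [Finset.sum_Icc_succ_top hone, Finset.sum_Icc_succ_top hone]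
        ring
      -- measurability of G w.r.t. ℱ n
      have hvnsm : StronglyMeasurable[ℱ n] (v (n+1)) := hvsm (n+1)
      have hGsm : StronglyMeasurable[ℱ n] G := by
        apply Real.continuous_exp.comp_stronglyMeasurable
        apply StronglyMeasurable.sub (hWsm n)
        simp only [div_eq_mul_inv]
        exact hvnsm.mul_const _
      have hFint : Integrable F μ := by
        refine Integrable.mono' (integrable_const (Real.exp 1))
          (Real.continuous_exp.comp_stronglyMeasurable (by
            simp only [div_eq_mul_inv]
            exact ((hXm (n+1)).mul_const _ : StronglyMeasurable _))).aestronglyMeasurable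
          (ae_of_all _ fun ω => ?_)
        rw [Real.norm_eq_abs, abs_of_pos (Real.exp_pos _), Real.exp_le_exp]
        exact (div_le_one hb).2 ((abs_le.1 (hbound _ ω)).2)
      have hGFint : Integrable (G * F) μ := by
        have := hMint (n+1)
        rw [hsplit] at this
        exact this
      have pullout := condExp_mul_of_stronglyMeasurable_left hGsm hGFint hFint
      have hcondint : Integrable (G * μ[F | ℱ n]) μ :=
        integrable_condExp.congr pullout
      -- pointwise exp bound
      have hptw : ∀ ω, F ω ≤ 1 + X (n+1) ω / b + (X (n+1) ω)^2 / b^2 := by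
        intro ω
        have h1 : X (n+1) ω / b ≤ 1 := (div_le_one hb).2 ((abs_le.1 (hbound _ ω)).2)
        calc F ω ≤ 1 + X (n+1) ω / b + (X (n+1) ω / b)^2 := exp_le_one_add_self_add_sq h1
          _ = 1 + X (n+1) ω / b + (X (n+1) ω)^2 / b^2 := by rw [div_pow]
      have hQint : Integrable (fun ω => 1 + X (n+1) ω / b + (X (n+1) ω)^2 / b^2) μ := by
        refine Integrable.add (Integrable.add (integrable_const 1) ?_) ?_
        · exact (hXint (n+1)).div_const b
        · exact (hX2int (n+1)).div_const _
      have hmono := condExp_mono (m := ℱ n) hFint hQint (ae_of_all _ hptw)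
      -- compute the condexp of the quadratic bound
      have hQeq : (fun ω => 1 + X (n+1) ω / b + (X (n+1) ω)^2 / b^2)
          = ((fun _ => (1:ℝ)) + b⁻¹ • X (n+1)) + ((b^2)⁻¹ • fun ω => (X (n+1) ω)^2) := by
        funext ω
        simp only [Pi.add_apply, Pi.smul_apply, smul_eq_mul]
        ring
      have hXc : μ[X (n+1) | ℱ n] =ᵐ[μ] 0 := hmds (n+1) hone
      have hsm1 := condExp_smul (μ := μ) (m := ℱ n) b⁻¹ (X (n+1))
      have hsm2 := condExp_smul (μ := μ) (m := ℱ n) (b^2)⁻¹ (fun ω => (X (n+1) ω)^2)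
      have hadd1 := condExp_add (μ := μ) (m := ℱ n) (integrable_const (1:ℝ))
        ((hXint (n+1)).smul b⁻¹)
      have hadd2 := condExp_add (μ := μ) (m := ℱ n)
        ((integrable_const (1:ℝ)).add ((hXint (n+1)).smul b⁻¹))
        ((hX2int (n+1)).smul (b^2)⁻¹)
      have hvn1 : v (n+1) = μ[(fun ω => (X (n+1) ω)^2) | ℱ n] := rfl
      have hcq : μ[(fun ω => 1 + X (n+1) ω / b + (X (n+1) ω)^2 / b^2) | ℱ n]
          =ᵐ[μ] fun ω => 1 + v (n+1) ω / b^2 := by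
        rw [hQeq]
        filter_upwards [hadd2, hadd1, hsm1, hsm2, hXc] with ω h2 h1 s1 s2 x0
        rw [h2, Pi.add_apply, h1, Pi.add_apply, s1, s2, condExp_const (ℱ.le n) (1:ℝ)]
        simp only [Pi.smul_apply, smul_eq_mul, Pi.zero_apply] at x0 ⊢
        rw [x0, ← hvn1]
        ring
      have hcond : μ[F | ℱ n] ≤ᵐ[μ] fun ω => Real.exp (v (n+1) ω / b^2) := by
        filter_upwards [hmono, hcq] with ω hm hc
        calc (μ[F | ℱ n]) ω ≤ (μ[(fun ω => 1 + X (n+1) ω / b + (X (n+1) ω)^2 / b^2) | ℱ n]) ω := hm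
          _ = 1 + v (n+1) ω / b^2 := hc
          _ ≤ Real.exp (v (n+1) ω / b^2) := by
              have := Real.add_one_le_exp (v (n+1) ω / b^2)
              linarith
      -- integrability of G * exp(v/b^2) = M n
      have hGH : (fun ω => G ω * Real.exp (v (n+1) ω / b^2))
          = fun ω => Real.exp ((∑ t ∈ Finset.Icc 1 n, X t ω) / b
            - (∑ t ∈ Finset.Icc 1 n, v t ω) / b ^ 2) := by
        funext ω
        rw [hGdef, ← Real.exp_add]
        ring_nf
      calc ∫ ω, Real.exp ((∑ t ∈ Finset.Icc 1 (n+1), X t ω) / b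
            - (∑ t ∈ Finset.Icc 1 (n+1), v t ω) / b ^ 2) ∂μ
          = ∫ ω, (G * F) ω ∂μ := by rw [hsplit]; rfl
        _ = ∫ ω, (μ[G * F | ℱ n]) ω ∂μ := (integral_condExp (ℱ.le n)).symm
        _ = ∫ ω, (G * μ[F | ℱ n]) ω ∂μ := integral_congr_ae pullout
        _ ≤ ∫ ω, G ω * Real.exp (v (n+1) ω / b^2) ∂μ := by
            refine integral_mono_ae hcondint (by rw [hGH]; exact hMint n) ?_
            filter_upwards [hcond] with ω h
            exact mul_le_mul_of_nonneg_left h (Real.exp_pos _).le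
        _ = ∫ ω, Real.exp ((∑ t ∈ Finset.Icc 1 n, X t ω) / b
            - (∑ t ∈ Finset.Icc 1 n, v t ω) / b ^ 2) ∂μ := by rw [hGH]
        _ ≤ 1 := ih

open MeasureTheory in
/-- Freedman-type martingale inequality (Beygelzimer et al. variant): for a
martingale difference sequence `X₁,…,X_T` with `|X_t| ≤ b` and predictable
quadratic variation `V = Σ E[X_t² | F_{t−1}]`, with probability at least
`1 − δ`, `Σ X_t ≤ V/b + b·ln(1/δ)`. -/
theorem stmt10 {Ω : Type*} {mΩ : MeasurableSpace Ω} (μ : Measure Ω)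
    [IsProbabilityMeasure μ] (T : ℕ) (ℱ : Filtration ℕ mΩ)
    (X : ℕ → Ω → ℝ) (b : ℝ) (hb : 0 < b)
    (hadapted : ∀ t, StronglyMeasurable[ℱ t] (X t))
    (hmds : ∀ t, 1 ≤ t → μ[X t | ℱ (t-1)] =ᵐ[μ] 0)
    (hbound : ∀ t ω, |X t ω| ≤ b)
    (δ : ℝ) (hδ : δ ∈ Set.Ioo (0:ℝ) 1) :
    1 - ENNReal.ofReal δ ≤
      μ {ω | ∑ t ∈ Finset.Icc 1 T, X t ω ≤
        (∑ t ∈ Finset.Icc 1 T, (μ[fun ω' => (X t ω')^2 | ℱ (t-1)]) ω) / b +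
          b * Real.log (1/δ)} := by
  obtain ⟨hδ0, hδ1⟩ := hδ
  obtain ⟨hMint, hMle⟩ := freedman_key μ ℱ X b hb hadapted hmds hbound T
  set W : Ω → ℝ := fun ω => (∑ t ∈ Finset.Icc 1 T, X t ω) / b
    - (∑ t ∈ Finset.Icc 1 T, (μ[fun ω' => (X t ω')^2 | ℱ (t-1)]) ω) / b ^ 2 with hW
  have hnn : 0 ≤ᵐ[μ] fun ω => Real.exp (W ω) := ae_of_all _ fun ω => (Real.exp_pos _).le
  have hmar := mul_meas_ge_le_integral_of_nonneg hnn hMint (1/δ)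
  have hmeas_lt : μ {x | 1/δ ≤ Real.exp (W x)} ≤ ENNReal.ofReal δ := by
    rw [ENNReal.le_ofReal_iff_toReal_le (measure_ne_top μ _) hδ0.le]
    have h := le_trans hmar hMle
    calc (μ {x | 1/δ ≤ Real.exp (W x)}).toReal
        = δ * (1/δ * (μ {x | 1/δ ≤ Real.exp (W x)}).toReal) := by
          field_simp
      _ ≤ δ * 1 := by
          have := mul_le_mul_of_nonneg_left h hδ0.le
          simpa [measureReal_def] using this
      _ = δ := mul_one δ
  have hsub : {ω | ¬ (∑ t ∈ Finset.Icc 1 T, X t ω ≤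
        (∑ t ∈ Finset.Icc 1 T, (μ[fun ω' => (X t ω')^2 | ℱ (t-1)]) ω) / b +
          b * Real.log (1/δ))} ⊆ {x | 1/δ ≤ Real.exp (W x)} := by
    intro ω h
    simp only [Set.mem_setOf_eq, not_le] at h
    set S := ∑ t ∈ Finset.Icc 1 T, X t ω with hS
    set V := ∑ t ∈ Finset.Icc 1 T, (μ[fun ω' => (X t ω')^2 | ℱ (t-1)]) ω with hV
    have hL : Real.log (1/δ) < W ω := by
      have h2 : Real.log (1/δ) * b < S - V / b := by nlinarith
      have h3 := (lt_div_iff₀ hb).2 h2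
      have h4 : (S - V / b) / b = S / b - V / b ^ 2 := by
        field_simp
      show Real.log (1/δ) < S / b - V / b ^ 2
      rw [← h4]
      exact h3
    have h5 : 1/δ < Real.exp (W ω) := by
      calc 1/δ = Real.exp (Real.log (1/δ)) := (Real.exp_log (by positivity)).symm
        _ < Real.exp (W ω) := Real.exp_lt_exp.2 hL
    exact h5.le
  have hunion : {ω | ∑ t ∈ Finset.Icc 1 T, X t ω ≤
        (∑ t ∈ Finset.Icc 1 T, (μ[fun ω' => (X t ω')^2 | ℱ (t-1)]) ω) / b +
          b * Real.log (1/δ)} ∪ {ω | ¬ (∑ t ∈ Finset.Icc 1 T, X t ω ≤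
        (∑ t ∈ Finset.Icc 1 T, (μ[fun ω' => (X t ω')^2 | ℱ (t-1)]) ω) / b +
          b * Real.log (1/δ))} = Set.univ := by
    ext ω
    simp only [Set.mem_union, Set.mem_setOf_eq, Set.mem_univ, iff_true]
    exact em _
  have hone : (1:ENNReal) ≤ μ {ω | ∑ t ∈ Finset.Icc 1 T, X t ω ≤
        (∑ t ∈ Finset.Icc 1 T, (μ[fun ω' => (X t ω')^2 | ℱ (t-1)]) ω) / b +
          b * Real.log (1/δ)} + ENNReal.ofReal δ := by
    have h0 : (1:ENNReal) = μ Set.univ := measure_univ.symm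
    rw [h0, ← hunion]
    refine le_trans (measure_union_le _ _) ?_
    gcongr
    exact le_trans (measure_mono hsub) hmeas_lt
  exact tsub_le_iff_right.2 hone
end

section
/- Let Y₁,…,Y_N be i.i.d. Bernoulli(q) random variables and c₁,…,c_N be F-predictable random variables with |c_t| ≤ 1, where Y_t is F_t-measurable and independent of F_{t−1}. Set B = Σ_t Y_t c_t and n = qN. Then for any β ∈ (0,1) with n ≥ 16·ln(4/β), with probability at least 1 − β/2, |B/n| ≤ (2/N)Σ_t|c_t| + √(ln(4/β)/(16n)). -/
open MeasureTheory Real ProbabilityTheory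


-- pointwise: exp u - 1 - u ≤ |u| for |u| ≤ 1
lemma exp_sub_one_sub_le {u : ℝ} (hu : |u| ≤ 1) : Real.exp u - 1 - u ≤ |u| := by
  obtain ⟨h1, h2⟩ := abs_le.mp hu
  rcases le_or_gt 0 u with h | h
  · have hc := convexOn_exp.2 (Set.mem_univ (0:ℝ)) (Set.mem_univ 1)
      (by linarith : (0:ℝ) ≤ 1 - u) h (by ring)
    simp only [smul_eq_mul, mul_zero, mul_one, zero_add, Real.exp_zero] at hc
    have he := Real.exp_one_lt_d9
    rw [abs_of_nonneg h]
    nlinarith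
  · have hc := convexOn_exp.2 (Set.mem_univ (-1:ℝ)) (Set.mem_univ 0)
      (by linarith : (0:ℝ) ≤ -u) (by linarith : (0:ℝ) ≤ 1 + u) (by ring)
    simp only [smul_eq_mul, mul_zero, mul_neg_one, add_zero, Real.exp_zero, neg_neg] at hc
    have he : Real.exp (-1) ≤ 1 := by
      rw [Real.exp_le_one_iff]; norm_num
    rw [abs_of_neg h]
    nlinarith [Real.exp_nonneg (-1)]

lemma key_pt (q l x : ℝ) (hq0 : 0 ≤ q) (hq1 : q ≤ 1) (hl0 : 0 ≤ l) (hl1 : l ≤ 1)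
    (hx : |x| ≤ 1) :
    q * Real.exp (l*(1-q)*x) + (1-q) * Real.exp (-(l*q*x)) ≤ Real.exp (l*q*|x|) := by
  set u := l * x with hu
  have huabs : |u| ≤ 1 := by
    rw [hu, abs_mul, abs_of_nonneg hl0]
    calc l * |x| ≤ 1 * 1 := by
          apply mul_le_mul hl1 hx (abs_nonneg x) zero_le_one
      _ = 1 := by ring
  have step1 : q * Real.exp (l*(1-q)*x) + (1-q) * Real.exp (-(l*q*x))
      = Real.exp (-(q*u)) * (1 + q * (Real.exp u - 1)) := by
    have e1 : l*(1-q)*x = u + -(q*u) := by rw [hu]; ring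
    have e2 : -(l*q*x) = -(q*u) := by rw [hu]; ring
    rw [e1, e2, Real.exp_add]; ring
  have step2 : 1 + q * (Real.exp u - 1) ≤ Real.exp (q * (Real.exp u - 1)) := by
    have := Real.add_one_le_exp (q * (Real.exp u - 1)); linarith
  have hpos : (0:ℝ) < Real.exp (-(q*u)) := Real.exp_pos _
  have step3 : Real.exp (-(q*u)) * (1 + q * (Real.exp u - 1))
      ≤ Real.exp (q * (Real.exp u - 1 - u)) := by
    calc Real.exp (-(q*u)) * (1 + q * (Real.exp u - 1))
        ≤ Real.exp (-(q*u)) * Real.exp (q * (Real.exp u - 1)) :=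
          mul_le_mul_of_nonneg_left step2 hpos.le
      _ = Real.exp (q * (Real.exp u - 1 - u)) := by
          rw [← Real.exp_add]; congr 1; ring
  have step4 : q * (Real.exp u - 1 - u) ≤ l*q*|x| := by
    have h4 := exp_sub_one_sub_le huabs
    have : |u| = l * |x| := by rw [hu, abs_mul, abs_of_nonneg hl0]
    nlinarith
  calc q * Real.exp (l*(1-q)*x) + (1-q) * Real.exp (-(l*q*x))
      = Real.exp (-(q*u)) * (1 + q * (Real.exp u - 1)) := step1
    _ ≤ Real.exp (q * (Real.exp u - 1 - u)) := step3
    _ ≤ Real.exp (l*q*|x|) := Real.exp_le_exp.mpr step4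
lemma bdd_integrable {Ω : Type*} {mΩ : MeasurableSpace Ω} (μ : Measure Ω)
    [IsProbabilityMeasure μ] {f : Ω → ℝ} (hf : Measurable f) (C : ℝ)
    (h : ∀ ω, |f ω| ≤ C) : Integrable f μ :=
  (integrable_const C).mono' hf.aestronglyMeasurable
    (ae_of_all _ fun ω => by rw [Real.norm_eq_abs]; exact h ω)

lemma aux_int_le_one {Ω : Type*} {mΩ : MeasurableSpace Ω} (μ : Measure Ω)
    [IsProbabilityMeasure μ]
    (N : ℕ) (ℱ : Filtration ℕ mΩ) (Y c : ℕ → Ω → ℝ) (q l : ℝ)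
    (hq0 : 0 < q) (hq1 : q ≤ 1) (hl0 : 0 ≤ l) (hl1 : l ≤ 1)
    (hY01 : ∀ t ω, Y t ω = 0 ∨ Y t ω = 1)
    (hYmeas : ∀ t, StronglyMeasurable[ℱ t] (Y t))
    (hYq : ∀ t ∈ Finset.Icc 1 N, μ {ω | Y t ω = 1} = ENNReal.ofReal q)
    (hYindep : ∀ t ∈ Finset.Icc 1 N,
      ProbabilityTheory.Indep (MeasurableSpace.comap (Y t) inferInstance) (ℱ (t-1)) μ)
    (hcpred : ∀ t, 1 ≤ t → StronglyMeasurable[ℱ (t-1)] (c t))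
    (hcbdd : ∀ t ω, |c t ω| ≤ 1) :
    ∀ k, k ≤ N →
      ∫ ω, Real.exp (∑ t ∈ Finset.Icc 1 k,
        (l*(Y t ω - q)*c t ω - l*q*|c t ω|)) ∂μ ≤ 1 := by
  -- measurability of partial sums wrt ℱ k
  have hsm : ∀ k, StronglyMeasurable[ℱ k] (fun ω => ∑ t ∈ Finset.Icc 1 k,
      (l*(Y t ω - q)*c t ω - l*q*|c t ω|)) := by
    intro k
    apply Finset.stronglyMeasurable_fun_sum
    intro t ht
    obtain ⟨ht1, ht2⟩ := Finset.mem_Icc.mp ht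
    have h1 : StronglyMeasurable[ℱ k] (Y t) := (hYmeas t).mono (ℱ.mono ht2)
    have h2 : StronglyMeasurable[ℱ k] (c t) :=
      (hcpred t ht1).mono (ℱ.mono (le_trans (Nat.sub_le t 1) ht2))
    exact ((stronglyMeasurable_const.mul (h1.sub stronglyMeasurable_const)).mul h2).sub
      (stronglyMeasurable_const.mul (continuous_abs.comp_stronglyMeasurable h2))
  -- per-term bound
  have hf_abs : ∀ t ω, abs (l*(Y t ω - q)*c t ω - l*q*|c t ω|) ≤ 2 := by
    intro t ω
    obtain ⟨hc1, hc2⟩ := abs_le.mp (hcbdd t ω)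
    have hcnn := abs_nonneg (c t ω)
    have hcle := hcbdd t ω
    have hm0 : 0 ≤ l*q := mul_nonneg hl0 hq0.le
    have hr0 : 0 ≤ l*(1-q) := mul_nonneg hl0 (by linarith)
    have a1 := mul_le_mul_of_nonneg_left hc2 hm0
    have a2 := mul_le_mul_of_nonneg_left hc1 hm0
    have a3 := mul_le_mul_of_nonneg_left hcle hm0
    have a4 : 0 ≤ l*q*|c t ω| := mul_nonneg hm0 hcnn
    have b1 := mul_le_mul_of_nonneg_left hc2 hr0
    have b2 := mul_le_mul_of_nonneg_left hc1 hr0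
    rcases hY01 t ω with h | h <;> rw [h] <;> rw [abs_le] <;> constructor <;> nlinarith
  -- bound for partial sums
  have hsum_le : ∀ k ω, (∑ t ∈ Finset.Icc 1 k, (l*(Y t ω - q)*c t ω - l*q*|c t ω|))
      ≤ 2 * k := by
    intro k ω
    calc (∑ t ∈ Finset.Icc 1 k, (l*(Y t ω - q)*c t ω - l*q*|c t ω|))
        ≤ ∑ t ∈ Finset.Icc 1 k, (2:ℝ) := by
          apply Finset.sum_le_sum
          intro t _
          exact le_of_abs_le (hf_abs t ω)
      _ ≤ 2 * k := by
          rw [Finset.sum_const, Nat.card_Icc]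
          simp only [nsmul_eq_mul]
          have : ((k + 1 - 1 : ℕ) : ℝ) ≤ (k : ℝ) := by
            simp
          nlinarith [this]
  intro k
  induction k with
  | zero =>
    intro _
    simp
  | succ k ih =>
    intro hk1
    have hk : k ≤ N := le_trans (Nat.le_succ k) hk1
    have hmem : k + 1 ∈ Finset.Icc 1 N := Finset.mem_Icc.mpr ⟨Nat.succ_le_succ (Nat.zero_le k), hk1⟩
    -- definitions
    set G : Ω → ℝ := fun ω => Real.exp (∑ t ∈ Finset.Icc 1 k,
      (l*(Y t ω - q)*c t ω - l*q*|c t ω|)) with hG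
    set A : Ω → ℝ := fun ω => Real.exp (l*(1-q)*c (k+1) ω - l*q*|c (k+1) ω|) with hA
    set B : Ω → ℝ := fun ω => Real.exp (-(l*q*c (k+1) ω) - l*q*|c (k+1) ω|) with hB
    -- measurability wrt ℱ k
    have hcm : StronglyMeasurable[ℱ k] (c (k+1)) := by
      have := hcpred (k+1) (Nat.succ_le_succ (Nat.zero_le k))
      simpa using this
    have hGF : StronglyMeasurable[ℱ k] G := (Real.continuous_exp.comp_stronglyMeasurable (hsm k))
    have hAF : StronglyMeasurable[ℱ k] A := by
      apply Real.continuous_exp.comp_stronglyMeasurable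
      exact (stronglyMeasurable_const.mul hcm).sub (stronglyMeasurable_const.mul (continuous_abs.comp_stronglyMeasurable hcm))
    have hBF : StronglyMeasurable[ℱ k] B := by
      apply Real.continuous_exp.comp_stronglyMeasurable
      exact ((stronglyMeasurable_const.mul hcm).neg).sub (stronglyMeasurable_const.mul (continuous_abs.comp_stronglyMeasurable hcm))
    have hAGF : StronglyMeasurable[ℱ k] (fun ω => A ω * G ω) := hAF.mul hGF
    have hBGF : StronglyMeasurable[ℱ k] (fun ω => B ω * G ω) := hBF.mul hGF
    -- global measurability
    have hYm : Measurable (Y (k+1)) := (hYmeas (k+1)).measurable.mono (ℱ.le _) le_rfl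
    have hAGm : Measurable (fun ω => A ω * G ω) := hAGF.measurable.mono (ℱ.le _) le_rfl
    have hBGm : Measurable (fun ω => B ω * G ω) := hBGF.measurable.mono (ℱ.le _) le_rfl
    have hGm : Measurable G := hGF.measurable.mono (ℱ.le _) le_rfl
    -- bounds
    have hGnn : ∀ ω, 0 ≤ G ω := fun ω => Real.exp_nonneg _
    have hGbd : ∀ ω, |G ω| ≤ Real.exp (2*k) := fun ω => by
      rw [abs_of_nonneg (hGnn ω)]
      exact Real.exp_le_exp.mpr (hsum_le k ω)
    have habd2 : ∀ ω, abs (l*(Y (k+1) ω - q)*c (k+1) ω - l*q*|c (k+1) ω|) ≤ 2 :=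
      hf_abs (k+1)
    have hAbd : ∀ ω, |A ω| ≤ Real.exp 2 := by
      intro ω
      rw [abs_of_nonneg (Real.exp_nonneg _)]
      apply Real.exp_le_exp.mpr
      rcases hY01 (k+1) ω with h | h
      · obtain ⟨hc1, hc2⟩ := abs_le.mp (hcbdd (k+1) ω)
        have hm0 : 0 ≤ l*q := mul_nonneg hl0 hq0.le
        have hr0 : 0 ≤ l*(1-q) := mul_nonneg hl0 (by linarith)
        have hcnn := abs_nonneg (c (k+1) ω)
        have a3 := mul_le_mul_of_nonneg_left (hcbdd (k+1) ω) hm0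
        have b1 := mul_le_mul_of_nonneg_left hc2 hr0
        nlinarith
      · have h2 := (abs_le.mp (habd2 ω)).2
        rw [h] at h2
        linarith
    have hBbd : ∀ ω, |B ω| ≤ Real.exp 2 := by
      intro ω
      rw [abs_of_nonneg (Real.exp_nonneg _)]
      apply Real.exp_le_exp.mpr
      have h2 := (abs_le.mp (habd2 ω)).2
      rcases hY01 (k+1) ω with h | h
      · rw [h] at h2
        have : l*(0 - q)*c (k+1) ω = -(l*q*c (k+1) ω) := by ring
        linarith [this ▸ h2]
      · obtain ⟨hc1, hc2⟩ := abs_le.mp (hcbdd (k+1) ω)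
        have hm0 : 0 ≤ l*q := mul_nonneg hl0 hq0.le
        have hcnn := abs_nonneg (c (k+1) ω)
        have a2 := mul_le_mul_of_nonneg_left hc1 hm0
        have a4 : 0 ≤ l*q*|c (k+1) ω| := mul_nonneg hm0 hcnn
        nlinarith
    have hYbd : ∀ ω, |Y (k+1) ω| ≤ 1 := by
      intro ω; rcases hY01 (k+1) ω with h | h <;> rw [h] <;> norm_num
    have hAGbd : ∀ ω, |A ω * G ω| ≤ Real.exp 2 * Real.exp (2*k) := fun ω => by
      rw [abs_mul]
      exact mul_le_mul (hAbd ω) (hGbd ω) (abs_nonneg _) (Real.exp_nonneg _)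
    have hBGbd : ∀ ω, |B ω * G ω| ≤ Real.exp 2 * Real.exp (2*k) := fun ω => by
      rw [abs_mul]
      exact mul_le_mul (hBbd ω) (hGbd ω) (abs_nonneg _) (Real.exp_nonneg _)
    -- integrability
    have hiG : Integrable G μ := bdd_integrable μ hGm _ hGbd
    have hiAG : Integrable (fun ω => A ω * G ω) μ := bdd_integrable μ hAGm _ hAGbd
    have hiBG : Integrable (fun ω => B ω * G ω) μ := bdd_integrable μ hBGm _ hBGbd
    have hiY : Integrable (Y (k+1)) μ := bdd_integrable μ hYm _ hYbd
    have hiYAG : Integrable (fun ω => Y (k+1) ω * (A ω * G ω)) μ := by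
      apply bdd_integrable μ (hYm.mul hAGm) (1 * (Real.exp 2 * Real.exp (2*k)))
      intro ω
      rw [Pi.mul_apply, abs_mul]
      exact mul_le_mul (hYbd ω) (hAGbd ω) (abs_nonneg _) zero_le_one
    have hiYBG : Integrable (fun ω => Y (k+1) ω * (B ω * G ω)) μ := by
      apply bdd_integrable μ (hYm.mul hBGm) (1 * (Real.exp 2 * Real.exp (2*k)))
      intro ω
      rw [Pi.mul_apply, abs_mul]
      exact mul_le_mul (hYbd ω) (hBGbd ω) (abs_nonneg _) zero_le_one
    -- independence
    have hind0 : ProbabilityTheory.Indep (MeasurableSpace.comap (Y (k+1)) inferInstance) (ℱ k) μ := by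
      have h := hYindep (k+1) hmem
      simpa using h
    have hindAG : IndepFun (Y (k+1)) (fun ω => A ω * G ω) μ :=
      ProbabilityTheory.indep_of_indep_of_le_right hind0
        (measurable_iff_comap_le.mp hAGF.measurable)
    have hindBG : IndepFun (Y (k+1)) (fun ω => B ω * G ω) μ :=
      ProbabilityTheory.indep_of_indep_of_le_right hind0
        (measurable_iff_comap_le.mp hBGF.measurable)
    -- E[Y] = q
    have hEY : ∫ ω, Y (k+1) ω ∂μ = q := by
      have hsetm : MeasurableSet {ω | Y (k+1) ω = 1} := by
        have : {ω | Y (k+1) ω = 1} = Y (k+1) ⁻¹' {1} := rfl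
        rw [this]
        exact hYm (measurableSet_singleton 1)
      have hYind : Y (k+1) = Set.indicator {ω | Y (k+1) ω = 1} (fun _ => (1:ℝ)) := by
        funext ω
        rcases hY01 (k+1) ω with h | h
        · rw [h, Set.indicator_of_notMem (by simp [h] : ω ∉ {ω | Y (k+1) ω = 1})]
        · rw [h, Set.indicator_of_mem (by simp [h] : ω ∈ {ω | Y (k+1) ω = 1})]
      rw [hYind, integral_indicator_const _ hsetm, measureReal_def, hYq (k+1) hmem, smul_eq_mul,
        ENNReal.toReal_ofReal hq0.le, mul_one]
    -- splitting
    have hsplit : ∀ ω, Real.exp (∑ t ∈ Finset.Icc 1 (k+1),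
        (l*(Y t ω - q)*c t ω - l*q*|c t ω|))
        = Y (k+1) ω * (A ω * G ω) + (1 - Y (k+1) ω) * (B ω * G ω) := by
      intro ω
      rw [Finset.sum_Icc_succ_top (Nat.succ_le_succ (Nat.zero_le k)), Real.exp_add]
      rcases hY01 (k+1) ω with h | h
      · have hf : l*(Y (k+1) ω - q)*c (k+1) ω - l*q*|c (k+1) ω|
            = -(l*q*c (k+1) ω) - l*q*|c (k+1) ω| := by rw [h]; ring
        rw [hf, h, hB, hG]
        ring
      · have hf : l*(Y (k+1) ω - q)*c (k+1) ω - l*q*|c (k+1) ω|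
            = l*(1-q)*c (k+1) ω - l*q*|c (k+1) ω| := by rw [h]; try ring
        rw [hf, h, hA, hG]
        ring
    calc ∫ ω, Real.exp (∑ t ∈ Finset.Icc 1 (k+1),
          (l*(Y t ω - q)*c t ω - l*q*|c t ω|)) ∂μ
        = ∫ ω, (Y (k+1) ω * (A ω * G ω) + (1 - Y (k+1) ω) * (B ω * G ω)) ∂μ := by
          congr 1; funext ω; exact hsplit ω
      _ = ∫ ω, Y (k+1) ω * (A ω * G ω) ∂μ + ∫ ω, (1 - Y (k+1) ω) * (B ω * G ω) ∂μ := by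
          apply integral_add hiYAG
          have : (fun ω => (1 - Y (k+1) ω) * (B ω * G ω))
              = fun ω => B ω * G ω - Y (k+1) ω * (B ω * G ω) := by
            funext ω; ring
          rw [this]
          exact hiBG.sub hiYBG
      _ = q * ∫ ω, A ω * G ω ∂μ + (1-q) * ∫ ω, B ω * G ω ∂μ := by
          have e1 : ∫ ω, Y (k+1) ω * (A ω * G ω) ∂μ
              = (∫ ω, Y (k+1) ω ∂μ) * ∫ ω, A ω * G ω ∂μ :=
            hindAG.integral_fun_mul_eq_mul_integral hiY.aestronglyMeasurable hiAG.aestronglyMeasurable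
          have e2 : ∫ ω, Y (k+1) ω * (B ω * G ω) ∂μ
              = (∫ ω, Y (k+1) ω ∂μ) * ∫ ω, B ω * G ω ∂μ :=
            hindBG.integral_fun_mul_eq_mul_integral hiY.aestronglyMeasurable hiBG.aestronglyMeasurable
          have e3 : ∫ ω, (1 - Y (k+1) ω) * (B ω * G ω) ∂μ
              = ∫ ω, B ω * G ω ∂μ - ∫ ω, Y (k+1) ω * (B ω * G ω) ∂μ := by
            have : (fun ω => (1 - Y (k+1) ω) * (B ω * G ω))
                = fun ω => B ω * G ω - Y (k+1) ω * (B ω * G ω) := by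
              funext ω; ring
            rw [this, integral_sub hiBG hiYBG]
          rw [e1, e3, e2, hEY]
          ring
      _ = ∫ ω, (q * (A ω * G ω) + (1-q) * (B ω * G ω)) ∂μ := by
          rw [integral_add ((hiAG.const_mul q)) ((hiBG.const_mul (1-q))),
            integral_const_mul, integral_const_mul]
      _ ≤ ∫ ω, G ω ∂μ := by
          apply integral_mono ((hiAG.const_mul q).add (hiBG.const_mul (1-q))) hiG
          intro ω
          have hkey := key_pt q l (c (k+1) ω) hq0.le hq1 hl0 hl1 (hcbdd (k+1) ω)
          have hAe : A ω = Real.exp (l*(1-q)*c (k+1) ω) * Real.exp (-(l*q*|c (k+1) ω|)) := by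
            simp only [hA, ← Real.exp_add]; congr 1; try ring
          have hBe : B ω = Real.exp (-(l*q*c (k+1) ω)) * Real.exp (-(l*q*|c (k+1) ω|)) := by
            simp only [hB, ← Real.exp_add]; congr 1; try ring
          have h1 : q * A ω + (1-q) * B ω ≤ 1 := by
            rw [hAe, hBe]
            have := mul_le_mul_of_nonneg_right hkey (Real.exp_nonneg (-(l*q*|c (k+1) ω|)))
            calc q * (Real.exp (l*(1-q)*c (k+1) ω) * Real.exp (-(l*q*|c (k+1) ω|)))
                + (1-q) * (Real.exp (-(l*q*c (k+1) ω)) * Real.exp (-(l*q*|c (k+1) ω|)))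
                = (q * Real.exp (l*(1-q)*c (k+1) ω)
                  + (1-q) * Real.exp (-(l*q*c (k+1) ω))) * Real.exp (-(l*q*|c (k+1) ω|)) := by
                  ring
              _ ≤ Real.exp (l*q*|c (k+1) ω|) * Real.exp (-(l*q*|c (k+1) ω|)) := this
              _ = 1 := by rw [← Real.exp_add]; simp
          calc q * (A ω * G ω) + (1-q) * (B ω * G ω)
              = (q * A ω + (1-q) * B ω) * G ω := by ring
            _ ≤ 1 * G ω := mul_le_mul_of_nonneg_right h1 (hGnn ω)
            _ = G ω := one_mul _
      _ ≤ 1 := ih hk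

lemma tail_bound {Ω : Type*} {mΩ : MeasurableSpace Ω} (μ : Measure Ω)
    [IsProbabilityMeasure μ]
    (N : ℕ) (ℱ : Filtration ℕ mΩ) (Y c : ℕ → Ω → ℝ) (q n : ℝ)
    (hq0 : 0 < q) (hq1 : q ≤ 1)
    (hY01 : ∀ t ω, Y t ω = 0 ∨ Y t ω = 1)
    (hYmeas : ∀ t, StronglyMeasurable[ℱ t] (Y t))
    (hYq : ∀ t ∈ Finset.Icc 1 N, μ {ω | Y t ω = 1} = ENNReal.ofReal q)
    (hYindep : ∀ t ∈ Finset.Icc 1 N,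
      ProbabilityTheory.Indep (MeasurableSpace.comap (Y t) inferInstance) (ℱ (t-1)) μ)
    (hcpred : ∀ t, 1 ≤ t → StronglyMeasurable[ℱ (t-1)] (c t))
    (hcbdd : ∀ t ω, |c t ω| ≤ 1)
    (hn0 : 0 < n) (β : ℝ) (hβ0 : 0 < β) (hβ1 : β < 1)
    (hnlarge : 16 * Real.log (4/β) ≤ n) :
    μ {ω | q * (∑ t ∈ Finset.Icc 1 N, |c t ω|)
        + n * Real.sqrt (Real.log (4/β)/(16*n))
        < ∑ t ∈ Finset.Icc 1 N, (Y t ω - q) * c t ω} ≤ ENNReal.ofReal (β/4) := by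
  have hb4 : (0:ℝ) < 4/β := by positivity
  have hb41 : (1:ℝ) < 4/β := by
    rw [lt_div_iff₀ hβ0]; linarith
  set Lg := Real.log (4/β) with hLgdef
  have hLg : 0 < Lg := Real.log_pos hb41
  set s := Real.sqrt (Lg/(16*n)) with hsdef
  set l := 4 * Real.sqrt (Lg/n) with hldef
  have hl0 : 0 ≤ l := by positivity
  have hsq : Real.sqrt (Lg/n) ≤ 1/4 := by
    have h1 : Lg/n ≤ 1/16 := by
      rw [div_le_iff₀ hn0]; linarith
    calc Real.sqrt (Lg/n) ≤ Real.sqrt (1/16) := Real.sqrt_le_sqrt h1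
      _ = 1/4 := by
        rw [show (1/16 : ℝ) = (1/4)^2 by norm_num, Real.sqrt_sq (by norm_num)]
  have hl1 : l ≤ 1 := by rw [hldef]; linarith
  have hlpos : 0 < l := by
    rw [hldef]; positivity
  -- l * (n * s) = Lg
  have hlns : l * (n * s) = Lg := by
    rw [hldef, hsdef]
    have h1 : Real.sqrt (Lg/n) * Real.sqrt (Lg/(16*n)) = Lg/(4*n) := by
      rw [← Real.sqrt_mul (by positivity)]
      rw [show Lg/n * (Lg/(16*n)) = (Lg/(4*n))^2 by field_simp; ring]
      exact Real.sqrt_sq (by positivity)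
    calc 4 * Real.sqrt (Lg/n) * (n * Real.sqrt (Lg/(16*n)))
        = 4 * n * (Real.sqrt (Lg/n) * Real.sqrt (Lg/(16*n))) := by ring
      _ = 4 * n * (Lg/(4*n)) := by rw [h1]
      _ = Lg := by field_simp
  -- X and its properties
  set X : Ω → ℝ := fun ω => ∑ t ∈ Finset.Icc 1 N,
    (l*(Y t ω - q)*c t ω - l*q*|c t ω|) with hXdef
  have hYm : ∀ t, Measurable (Y t) := fun t => (hYmeas t).measurable.mono (ℱ.le t) le_rfl
  have hcm : ∀ t, 1 ≤ t → Measurable (c t) :=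
    fun t ht => (hcpred t ht).measurable.mono (ℱ.le _) le_rfl
  have hXm : Measurable X := by
    apply Finset.measurable_sum
    intro t ht
    obtain ⟨ht1, _⟩ := Finset.mem_Icc.mp ht
    exact ((measurable_const.mul ((hYm t).sub measurable_const)).mul (hcm t ht1)).sub
      (measurable_const.mul (hcm t ht1).abs)
  have hXbd : ∀ ω, X ω ≤ 2 * N := by
    intro ω
    calc X ω ≤ ∑ t ∈ Finset.Icc 1 N, (2:ℝ) := by
          apply Finset.sum_le_sum
          intro t _
          obtain ⟨hc1, hc2⟩ := abs_le.mp (hcbdd t ω)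
          have hcnn := abs_nonneg (c t ω)
          have hcle := hcbdd t ω
          have hm0 : 0 ≤ l*q := mul_nonneg hl0 hq0.le
          have hr0 : 0 ≤ l*(1-q) := mul_nonneg hl0 (by linarith)
          have a4 : 0 ≤ l*q*|c t ω| := mul_nonneg hm0 hcnn
          have b1 := mul_le_mul_of_nonneg_left hc2 hr0
          have a1 := mul_le_mul_of_nonneg_left hc2 hm0
          rcases hY01 t ω with h | h <;> rw [h] <;> nlinarith
      _ ≤ 2 * N := by
          rw [Finset.sum_const, Nat.card_Icc]
          simp only [nsmul_eq_mul]
          have : ((N + 1 - 1 : ℕ) : ℝ) ≤ (N : ℝ) := by simp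
          nlinarith [this]
  have hint : Integrable (fun ω => Real.exp (X ω)) μ := by
    apply (integrable_const (Real.exp (2*N))).mono'
      (Real.measurable_exp.comp hXm).aestronglyMeasurable
    apply ae_of_all
    intro ω
    simpa [Real.norm_eq_abs, abs_of_nonneg (Real.exp_nonneg (X ω))] using
      Real.exp_le_exp.mpr (hXbd ω)
  have hintle : ∫ ω, Real.exp (X ω) ∂μ ≤ 1 :=
    aux_int_le_one μ N ℱ Y c q l hq0 hq1 hl0 hl1 hY01 hYmeas hYq hYindep hcpred hcbdd N le_rfl
  -- Markov
  have hmark := mul_meas_ge_le_integral_of_nonneg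
    (ae_of_all μ fun ω => Real.exp_nonneg (X ω)) hint (4/β)
  have hμle : (μ {ω | 4/β ≤ Real.exp (X ω)}).toReal ≤ β/4 := by
    have h2 : 4/β * (μ {ω | 4/β ≤ Real.exp (X ω)}).toReal ≤ 1 := le_trans hmark hintle
    rw [div_mul_eq_mul_div, div_le_iff₀ hβ0] at h2
    have := ENNReal.toReal_nonneg (a := μ {ω | 4/β ≤ Real.exp (X ω)})
    linarith
  -- subset
  have hsub : {ω | q * (∑ t ∈ Finset.Icc 1 N, |c t ω|) + n * s
      < ∑ t ∈ Finset.Icc 1 N, (Y t ω - q) * c t ω}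
      ⊆ {ω | 4/β ≤ Real.exp (X ω)} := by
    intro ω hω
    simp only [Set.mem_setOf_eq] at hω ⊢
    have hXval : X ω = l * ((∑ t ∈ Finset.Icc 1 N, (Y t ω - q) * c t ω)
        - q * ∑ t ∈ Finset.Icc 1 N, |c t ω|) := by
      simp only [hXdef]
      rw [Finset.sum_sub_distrib, mul_sub, Finset.mul_sum, ← mul_assoc, Finset.mul_sum]
      congr 1
      exact Finset.sum_congr rfl fun t _ => by ring
    have h3 : Lg < X ω := by
      rw [hXval, ← hlns]
      apply mul_lt_mul_of_pos_left _ hlpos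
      linarith
    have h4 : Real.exp Lg ≤ Real.exp (X ω) := Real.exp_le_exp.mpr h3.le
    rwa [hLgdef, Real.exp_log hb4] at h4
  calc μ _ ≤ μ {ω | 4/β ≤ Real.exp (X ω)} := measure_mono hsub
    _ = ENNReal.ofReal ((μ {ω | 4/β ≤ Real.exp (X ω)}).toReal) :=
        (ENNReal.ofReal_toReal (measure_ne_top μ _)).symm
    _ ≤ ENNReal.ofReal (β/4) := ENNReal.ofReal_le_ofReal hμle

open MeasureTheory in
/-- Corruption-concentration step: if `Y_t` are Bernoulli(q) indicators (each
independent of the past `F_{t-1}`) and `c_t` are `F`-predictable corruptions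
with `|c_t| ≤ 1`, then with `n = qN ≥ 16 ln(4/β)`, with probability at least
`1 − β/2`, `|Σ_t Y_t c_t|/n ≤ (2/N)·Σ_t |c_t| + √(ln(4/β)/(16n))`. -/
theorem stmt11 {Ω : Type*} {mΩ : MeasurableSpace Ω} (μ : Measure Ω)
    [IsProbabilityMeasure μ] (N : ℕ) (hN : 1 ≤ N) (ℱ : Filtration ℕ mΩ)
    (Y c : ℕ → Ω → ℝ) (q n : ℝ) (hq : q ∈ Set.Ioc (0:ℝ) 1)
    (hY01 : ∀ t ω, Y t ω = 0 ∨ Y t ω = 1)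
    (hYmeas : ∀ t, StronglyMeasurable[ℱ t] (Y t))
    (hYq : ∀ t ∈ Finset.Icc 1 N, μ {ω | Y t ω = 1} = ENNReal.ofReal q)
    (hYindep : ∀ t ∈ Finset.Icc 1 N,
      ProbabilityTheory.Indep (MeasurableSpace.comap (Y t) inferInstance) (ℱ (t-1)) μ)
    (hcpred : ∀ t, 1 ≤ t → StronglyMeasurable[ℱ (t-1)] (c t))
    (hcbdd : ∀ t ω, |c t ω| ≤ 1)
    (hn : n = q * N) (β : ℝ) (hβ : β ∈ Set.Ioo (0:ℝ) 1)
    (hnlarge : 16 * Real.log (4/β) ≤ n) :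
    1 - ENNReal.ofReal (β/2) ≤
      μ {ω | |(∑ t ∈ Finset.Icc 1 N, Y t ω * c t ω) / n| ≤
        (2/N) * ∑ t ∈ Finset.Icc 1 N, |c t ω| +
          Real.sqrt (Real.log (4/β) / (16 * n))} := by
  obtain ⟨hq0, hq1⟩ := hq
  obtain ⟨hβ0, hβ1⟩ := hβ
  have hN0 : (0:ℝ) < N := by exact_mod_cast Nat.lt_of_lt_of_le Nat.zero_lt_one hN
  have hn0 : 0 < n := by rw [hn]; exact mul_pos hq0 hN0
  set s := Real.sqrt (Real.log (4/β)/(16*n)) with hsdef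
  have hs0 : 0 ≤ s := Real.sqrt_nonneg _
  -- the two tail sets
  set A1 := {ω | q * (∑ t ∈ Finset.Icc 1 N, |c t ω|) + n * s
      < ∑ t ∈ Finset.Icc 1 N, (Y t ω - q) * c t ω} with hA1def
  set A2 := {ω | q * (∑ t ∈ Finset.Icc 1 N, |c t ω|) + n * s
      < -(∑ t ∈ Finset.Icc 1 N, (Y t ω - q) * c t ω)} with hA2def
  have hT1 : μ A1 ≤ ENNReal.ofReal (β/4) :=
    tail_bound μ N ℱ Y c q n hq0 hq1 hY01 hYmeas hYq hYindep hcpred hcbdd hn0 β hβ0 hβ1 hnlarge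
  have hT2 : μ A2 ≤ ENNReal.ofReal (β/4) := by
    have h := tail_bound μ N ℱ Y (fun t ω => -(c t ω)) q n hq0 hq1 hY01 hYmeas hYq hYindep
      (fun t ht => (hcpred t ht).neg)
      (fun t ω => by rw [abs_neg]; exact hcbdd t ω) hn0 β hβ0 hβ1 hnlarge
    have heq : {ω | q * (∑ t ∈ Finset.Icc 1 N, |(-(c t ω))|) + n * s
        < ∑ t ∈ Finset.Icc 1 N, (Y t ω - q) * (-(c t ω))} = A2 := by
      ext ω
      simp only [hA2def, Set.mem_setOf_eq, abs_neg, mul_neg, Finset.sum_neg_distrib]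
    rwa [heq] at h
  -- measurability
  have hYm : ∀ t, Measurable (Y t) := fun t => (hYmeas t).measurable.mono (ℱ.le t) le_rfl
  have hcm : ∀ t ∈ Finset.Icc 1 N, Measurable (c t) :=
    fun t ht => (hcpred t (Finset.mem_Icc.mp ht).1).measurable.mono (ℱ.le _) le_rfl
  have hBm : Measurable (fun ω => ∑ t ∈ Finset.Icc 1 N, Y t ω * c t ω) :=
    Finset.measurable_sum _ (fun t ht => (hYm t).mul (hcm t ht))
  have hTm : Measurable (fun ω => ∑ t ∈ Finset.Icc 1 N, |c t ω|) :=
    Finset.measurable_sum _ (fun t ht => (hcm t ht).abs)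
  set E := {ω | |(∑ t ∈ Finset.Icc 1 N, Y t ω * c t ω) / n| ≤
      (2/N) * ∑ t ∈ Finset.Icc 1 N, |c t ω| + s} with hEdef
  have hEm : MeasurableSet E := by
    apply measurableSet_le
    · exact (hBm.div_const n).abs
    · exact (hTm.const_mul (2/N)).add_const s
  -- complement subset
  have hsub : Eᶜ ⊆ A1 ∪ A2 := by
    intro ω hω
    rw [Set.mem_compl_iff] at hω
    by_contra hmem
    rw [Set.mem_union] at hmem
    push_neg at hmem
    obtain ⟨h1, h2⟩ := hmem
    apply hω
    simp only [hA1def, Set.mem_setOf_eq, not_lt] at h1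
    simp only [hA2def, Set.mem_setOf_eq, not_lt] at h2
    show |(∑ t ∈ Finset.Icc 1 N, Y t ω * c t ω) / n|
        ≤ (2/N) * ∑ t ∈ Finset.Icc 1 N, |c t ω| + s
    have hB : ∑ t ∈ Finset.Icc 1 N, Y t ω * c t ω
        = q * (∑ t ∈ Finset.Icc 1 N, c t ω)
          + ∑ t ∈ Finset.Icc 1 N, (Y t ω - q) * c t ω := by
      rw [Finset.mul_sum, ← Finset.sum_add_distrib]
      exact Finset.sum_congr rfl fun t _ => by ring
    have hqc : |q * ∑ t ∈ Finset.Icc 1 N, c t ω|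
        ≤ q * ∑ t ∈ Finset.Icc 1 N, |c t ω| := by
      rw [abs_mul, abs_of_pos hq0]
      exact mul_le_mul_of_nonneg_left (Finset.abs_sum_le_sum_abs _ _) hq0.le
    have hSabs : |∑ t ∈ Finset.Icc 1 N, (Y t ω - q) * c t ω|
        ≤ q * (∑ t ∈ Finset.Icc 1 N, |c t ω|) + n * s :=
      abs_le.mpr ⟨by linarith, by linarith⟩
    have habs := abs_add_le (q * ∑ t ∈ Finset.Icc 1 N, c t ω)
      (∑ t ∈ Finset.Icc 1 N, (Y t ω - q) * c t ω)
    rw [abs_div, abs_of_pos hn0, div_le_iff₀ hn0]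
    have heq : ((2/N) * (∑ t ∈ Finset.Icc 1 N, |c t ω|) + s) * n
        = 2 * (q * ∑ t ∈ Finset.Icc 1 N, |c t ω|) + n * s := by
      rw [hn]
      field_simp
    rw [heq]
    rw [hB]
    linarith
  have hEc : μ Eᶜ ≤ ENNReal.ofReal (β/2) := by
    calc μ Eᶜ ≤ μ (A1 ∪ A2) := measure_mono hsub
      _ ≤ μ A1 + μ A2 := measure_union_le _ _
      _ ≤ ENNReal.ofReal (β/4) + ENNReal.ofReal (β/4) := add_le_add hT1 hT2
      _ = ENNReal.ofReal (β/2) := by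
          rw [← ENNReal.ofReal_add (by positivity) (by positivity)]
          congr 1
          ring
  have hE1 : μ E = 1 - μ Eᶜ := by
    have h := prob_compl_eq_one_sub (μ := μ) hEm.compl
    rwa [compl_compl] at h
  rw [hE1]
  exact tsub_le_tsub_left hEc 1
end

section
/- Known-optimal-reward variant: suppose Δ_i^m = max{2^{-m}, μ⋆ − r_i^m, Δ_i^{m-1}/2} with Δ_i^0 = 1, and the accuracy event |r_i^m − μ_i| ≤ 2C_m/N_m + Δ_i^{m-1}/16 holds for all i, m. Then for all epochs m and arms i, Δ_i^m ≥ Δ_i/2 − 2C_m/N_m, where Δ_i = μ⋆ − μ_i. -/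
/-- Known-optimal-reward variant: with the modified update
`Δ_i^m = max{2^{-m}, μ⋆ − r_i^m, Δ_i^{m-1}/2}` and the accuracy event, for all
epochs `m ≥ 1` and arms `i` we have `Δ_i^m ≥ Δ_i/2 − 2C_m/N_m`. -/
theorem stmt13 (K : ℕ) (μ : Fin K → ℝ) (hμ : ∀ i, μ i ∈ Set.Icc (0:ℝ) 1)
    (istar : Fin K) (hstar : IsGreatest (Set.range μ) (μ istar))
    (C N : ℕ → ℝ) (hC : ∀ m, 0 ≤ C m) (hN : ∀ m, 0 < N m)
    (r : ℕ → Fin K → ℝ) (Δ : ℕ → Fin K → ℝ)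
    (hΔ0 : ∀ i, Δ 0 i = 1)
    (hacc : ∀ m, 1 ≤ m → ∀ i, |r m i - μ i| ≤ 2 * C m / N m + Δ (m-1) i / 16)
    (hΔ : ∀ m, 1 ≤ m → ∀ i,
      Δ m i = max (max ((1/2:ℝ)^m) (μ istar - r m i)) (Δ (m-1) i / 2)) :
    ∀ m, 1 ≤ m → ∀ i, (μ istar - μ i) / 2 - 2 * C m / N m ≤ Δ m i := by
  intro m hm i
  have hΔi : 0 ≤ μ istar - μ i := by
    have := hstar.2 ⟨i, rfl⟩
    linarith
  have hCN : 0 ≤ 2 * C m / N m := div_nonneg (by linarith [hC m]) (hN m).le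
  rw [hΔ m hm i]
  rcases le_or_gt (μ istar - μ i) (Δ (m-1) i) with h | h
  · have : (μ istar - μ i) / 2 - 2 * C m / N m ≤ Δ (m-1) i / 2 := by linarith
    exact this.trans (le_max_right _ _)
  · have hacc' := hacc m hm i
    have habs : r m i - μ i ≤ 2 * C m / N m + Δ (m-1) i / 16 :=
      (abs_le.mp hacc').2
    have : (μ istar - μ i) / 2 - 2 * C m / N m ≤ μ istar - r m i := by linarith
    exact this.trans ((le_max_right _ _).trans (le_max_left _ _))
end
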